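/- arXiv:2107.01690 — 3 statements merged into one kernel-verified Lean document; each statement's English description precedes it below -/
import Mathlib

section
/- Let A ≪ B in 𝕀ℝ and let F : 𝕀_{[A,B]} → 𝕀ℝ satisfy C ≤ F(X) ≤ D for all X ∈ 𝕀_{[A,B]}, where C, D ∈ 𝕀ℝ. Then for every partition 𝒫 of 𝕀_{[A,B]}: C·d_M(A,B) ≤ σ(F,𝒫) ≤ ∫̲_A^B F(X)dX ≤ ∫̄_A^B F(X)dX ≤ Σ(F,𝒫) ≤ D·d_M(A,B), all inequalities in the Kulisch–Miranker order. -/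
/-- `𝕀ℝ`: the set of nonempty closed bounded real intervals, identified with
pairs `(lo, hi) ∈ ℝ × ℝ` with `lo ≤ hi`.  The subtype order inherited from the
product order on `ℝ × ℝ` is exactly the Kulisch–Miranker order, and the
inherited metric (sup metric of `ℝ × ℝ`) is exactly the Moore metric `d_M`. -/
abbrev IR : Type := {p : ℝ × ℝ // p.1 ≤ p.2}

namespace IR

/-- Left endpoint projection `π₁`. -/
def lo (A : IR) : ℝ := A.val.1

/-- Right endpoint projection `π₂`. -/
def hi (A : IR) : ℝ := A.val.2

/-- The strict Kulisch–Miranker order `A ≪ B`. -/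
def sll (A B : IR) : Prop := lo A < lo B ∧ hi A < hi B

/-- The Moore metric `d_M`. -/
noncomputable def dM (A B : IR) : ℝ := max |lo B - lo A| |hi B - hi A|

/-- `𝕀_{[A,B]} = {X ∈ 𝕀ℝ : A ≤ X ≤ B}`. -/
def box (A B : IR) : Set IR := {X : IR | A ≤ X ∧ X ≤ B}

/-- The interval `[u,v]` (with a junk degenerate value if `u > v`). -/
noncomputable def mkI (u v : ℝ) : IR := if h : u ≤ v then ⟨(u, v), h⟩ else ⟨(u, u), le_rfl⟩

/-- The point `A + t(B - A)` on the segment from `A` to `B`. -/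
noncomputable def seg (A B : IR) (t : ℝ) : IR :=
  mkI (lo A + t * (lo B - lo A)) (hi A + t * (hi B - hi A))

/-- Componentwise infimum of a set of intervals, as a pair of reals. -/
noncomputable def infS (S : Set IR) : ℝ × ℝ := (sInf (lo '' S), sInf (hi '' S))

/-- Componentwise supremum of a set of intervals, as a pair of reals. -/
noncomputable def supS (S : Set IR) : ℝ × ℝ := (sSup (lo '' S), sSup (hi '' S))

/-- A partition `A = P₀ ≪ P₁ ≪ ⋯ ≪ P_N = B` of `𝕀_{[A,B]}`, described by its
parameters `0 = t₀ < t₁ < ⋯ < t_N = 1` (so that `P_k = A + t_k (B - A)`). -/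
structure Partition where
  n : ℕ
  npos : 0 < n
  t : ℕ → ℝ
  t0 : t 0 = 0
  tn : t n = 1
  mono : ∀ i < n, t i < t (i + 1)

/-- The set of parameters of a partition. -/
def Partition.pts (P : Partition) : Set ℝ := P.t '' Set.Iic P.n

/-- The set of points `P_k = A + t_k(B-A)` of a partition of `𝕀_{[A,B]}`. -/
noncomputable def Partition.ipts (A B : IR) (P : Partition) : Set IR :=
  (fun i => seg A B (P.t i)) '' Set.Iic P.n

/-- Lower Riemann sum `σ(F, 𝒫)` (as a pair of reals; interval sums are
componentwise and `λ • [u,v] = [λu, λv]` for the scalars `λ = d_M ≥ 0`). -/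
noncomputable def lowerSum (A B : IR) (F : IR → IR) (P : Partition) : ℝ × ℝ :=
  ∑ k ∈ Finset.range P.n,
    dM (seg A B (P.t k)) (seg A B (P.t (k + 1))) •
      infS (F '' box (seg A B (P.t k)) (seg A B (P.t (k + 1))))

/-- Upper Riemann sum `Σ(F, 𝒫)`. -/
noncomputable def upperSum (A B : IR) (F : IR → IR) (P : Partition) : ℝ × ℝ :=
  ∑ k ∈ Finset.range P.n,
    dM (seg A B (P.t k)) (seg A B (P.t (k + 1))) •
      supS (F '' box (seg A B (P.t k)) (seg A B (P.t (k + 1))))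

/-- The lower integral `∫̲_A^B F(X)dX`: componentwise supremum of the lower
Riemann sums over all partitions. -/
noncomputable def lowerInt (A B : IR) (F : IR → IR) : ℝ × ℝ :=
  (sSup (Set.range fun P : Partition => (lowerSum A B F P).1),
   sSup (Set.range fun P : Partition => (lowerSum A B F P).2))

/-- The upper integral `∫̄_A^B F(X)dX`: componentwise infimum of the upper
Riemann sums over all partitions. -/
noncomputable def upperInt (A B : IR) (F : IR → IR) : ℝ × ℝ :=
  (sInf (Set.range fun P : Partition => (upperSum A B F P).1),
   sInf (Set.range fun P : Partition => (upperSum A B F P).2))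

/-- `F` is bounded on `𝕀_{[A,B]}` (order bounded, equivalently metrically
bounded). -/
def BoundedOn (F : IR → IR) (A B : IR) : Prop :=
  ∃ C D : IR, ∀ X ∈ box A B, C ≤ F X ∧ F X ≤ D

lemma le_iff' {X Y : IR} : X ≤ Y ↔ lo X ≤ lo Y ∧ hi X ≤ hi Y := Iff.rfl

lemma clamp_diff {a b u v : ℝ} (hab : a ≤ b) (huv : u ≤ v) :
    min b (max a v) - min b (max a u) = max 0 (min b v - max a u) := by
  simp only [min_def, max_def]; split_ifs <;> linarith

lemma seg_eval {A B : IR} (h : sll A B) {t : ℝ} (h0 : 0 ≤ t) (h1 : t ≤ 1) :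
    lo (seg A B t) = lo A + t * (lo B - lo A) ∧
    hi (seg A B t) = hi A + t * (hi B - hi A) := by
  have hA : lo A ≤ hi A := A.2
  have hB : lo B ≤ hi B := B.2
  have hle : lo A + t * (lo B - lo A) ≤ hi A + t * (hi B - hi A) := by
    nlinarith [mul_nonneg h0 (sub_nonneg.2 hB), mul_nonneg (sub_nonneg.2 h1) (sub_nonneg.2 hA)]
  unfold seg mkI
  rw [dif_pos hle]
  exact ⟨rfl, rfl⟩

lemma seg_le_seg {A B : IR} (h : sll A B) {s t : ℝ} (h0 : 0 ≤ s) (hst : s ≤ t) (h1 : t ≤ 1) :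
    seg A B s ≤ seg A B t := by
  obtain ⟨e1, e2⟩ := seg_eval h h0 (hst.trans h1)
  obtain ⟨e3, e4⟩ := seg_eval h (h0.trans hst) h1
  rw [le_iff', e1, e2, e3, e4]
  constructor
  · nlinarith [mul_le_mul_of_nonneg_right hst (sub_pos.2 h.1).le]
  · nlinarith [mul_le_mul_of_nonneg_right hst (sub_pos.2 h.2).le]

lemma A_le_seg {A B : IR} (h : sll A B) {t : ℝ} (h0 : 0 ≤ t) (h1 : t ≤ 1) :
    A ≤ seg A B t := by
  obtain ⟨e1, e2⟩ := seg_eval h h0 h1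
  rw [le_iff', e1, e2]
  constructor
  · nlinarith [mul_nonneg h0 (sub_pos.2 h.1).le]
  · nlinarith [mul_nonneg h0 (sub_pos.2 h.2).le]

lemma seg_le_B {A B : IR} (h : sll A B) {t : ℝ} (h0 : 0 ≤ t) (h1 : t ≤ 1) :
    seg A B t ≤ B := by
  obtain ⟨e1, e2⟩ := seg_eval h h0 h1
  rw [le_iff', e1, e2]
  constructor
  · nlinarith [mul_nonneg (sub_nonneg.2 h1) (sub_pos.2 h.1).le]
  · nlinarith [mul_nonneg (sub_nonneg.2 h1) (sub_pos.2 h.2).le]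

lemma box_subset {A B : IR} (h : sll A B) {u v : ℝ} (hu : 0 ≤ u) (huv : u ≤ v) (hv : v ≤ 1) :
    box (seg A B u) (seg A B v) ⊆ box A B := by
  rintro X ⟨hx1, hx2⟩
  exact ⟨(A_le_seg h hu (huv.trans hv)).trans hx1, hx2.trans (seg_le_B h (hu.trans huv) hv)⟩

lemma seg_mem_box {A B : IR} (h : sll A B) {u v x : ℝ} (hu : 0 ≤ u) (hux : u ≤ x)
    (hxv : x ≤ v) (hv : v ≤ 1) : seg A B x ∈ box (seg A B u) (seg A B v) :=
  ⟨seg_le_seg h hu hux (hxv.trans hv), seg_le_seg h (hu.trans hux) hxv hv⟩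

lemma dM_nonneg (A B : IR) : 0 ≤ dM A B := le_trans (abs_nonneg _) (le_max_left _ _)

lemma dM_seg {A B : IR} (h : sll A B) {s t : ℝ} (h0 : 0 ≤ s) (hst : s ≤ t) (h1 : t ≤ 1) :
    dM (seg A B s) (seg A B t) = (t - s) * dM A B := by
  obtain ⟨e1, e2⟩ := seg_eval h h0 (hst.trans h1)
  obtain ⟨e3, e4⟩ := seg_eval h (h0.trans hst) h1
  have hst' : 0 ≤ t - s := sub_nonneg.2 hst
  have a1 : 0 ≤ lo B - lo A := (sub_pos.2 h.1).le
  have a2 : 0 ≤ hi B - hi A := (sub_pos.2 h.2).le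
  unfold dM
  rw [e1, e2, e3, e4,
    show lo A + t * (lo B - lo A) - (lo A + s * (lo B - lo A)) = (t - s) * (lo B - lo A) from by ring,
    show hi A + t * (hi B - hi A) - (hi A + s * (hi B - hi A)) = (t - s) * (hi B - hi A) from by ring,
    abs_of_nonneg (mul_nonneg hst' a1), abs_of_nonneg (mul_nonneg hst' a2),
    abs_of_nonneg a1, abs_of_nonneg a2]
  exact (mul_max_of_nonneg _ _ hst').symm

lemma Partition.t_mono (P : Partition) {i j : ℕ} (hij : i ≤ j) (hj : j ≤ P.n) :
    P.t i ≤ P.t j := by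
  induction j with
  | zero => exact le_of_eq (by rw [Nat.le_zero.1 hij])
  | succ j ih =>
    rcases eq_or_lt_of_le hij with rfl | hlt
    · exact le_rfl
    · exact (ih (Nat.lt_succ_iff.1 hlt) (Nat.le_of_succ_le hj)).trans (P.mono j hj).le

lemma Partition.t_nonneg (P : Partition) {k : ℕ} (hk : k ≤ P.n) : 0 ≤ P.t k :=
  P.t0 ▸ P.t_mono (Nat.zero_le k) hk

lemma Partition.t_le_one (P : Partition) {k : ℕ} (hk : k ≤ P.n) : P.t k ≤ 1 :=
  P.tn ▸ P.t_mono hk le_rfl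

lemma bounds_on {A B : IR} (h : sll A B) {g : IR → ℝ} {c d : ℝ}
    (hg : ∀ X ∈ box A B, c ≤ g X ∧ g X ≤ d)
    {u v : ℝ} (hu : 0 ≤ u) (huv : u ≤ v) (hv : v ≤ 1) :
    (c ≤ sInf (g '' box (seg A B u) (seg A B v)) ∧
     sSup (g '' box (seg A B u) (seg A B v)) ≤ d) ∧
    ∀ x, u ≤ x → x ≤ v →
      sInf (g '' box (seg A B u) (seg A B v)) ≤ g (seg A B x) ∧
      g (seg A B x) ≤ sSup (g '' box (seg A B u) (seg A B v)) := by
  set S := g '' box (seg A B u) (seg A B v) with hS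
  have hne : S.Nonempty := ⟨g (seg A B u), ⟨seg A B u, seg_mem_box h hu le_rfl huv hv, rfl⟩⟩
  have hbd : ∀ y ∈ S, c ≤ y ∧ y ≤ d := by
    rintro y ⟨X, hX, rfl⟩; exact hg X (box_subset h hu huv hv hX)
  have hbb : BddBelow S := ⟨c, fun y hy => (hbd y hy).1⟩
  have hba : BddAbove S := ⟨d, fun y hy => (hbd y hy).2⟩
  refine ⟨⟨le_csInf hne fun y hy => (hbd y hy).1, csSup_le hne fun y hy => (hbd y hy).2⟩, ?_⟩
  intro x hux hxv
  have hmem : g (seg A B x) ∈ S := ⟨seg A B x, seg_mem_box h hu hux hxv hv, rfl⟩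
  exact ⟨csInf_le hbb hmem, le_csSup hba hmem⟩

/-- overlap length of the `k`-th `t`-subinterval and the `j`-th `s`-subinterval -/
noncomputable def ell (t s : ℕ → ℝ) (k j : ℕ) : ℝ :=
  max 0 (min (t (k + 1)) (s (j + 1)) - max (t k) (s j))

lemma ell_comm (t s : ℕ → ℝ) (k j : ℕ) : ell t s k j = ell s t j k := by
  unfold ell; rw [min_comm, max_comm (t k)]

lemma ell_nonneg (t s : ℕ → ℝ) (k j : ℕ) : 0 ≤ ell t s k j := le_max_left _ _

lemma ell_sum (P Q : Partition) {k : ℕ} (hk : k < P.n) :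
    ∑ j ∈ Finset.range Q.n, ell P.t Q.t k j = P.t (k + 1) - P.t k := by
  have e : ∀ j ∈ Finset.range Q.n, ell P.t Q.t k j =
      min (P.t (k + 1)) (max (P.t k) (Q.t (j + 1))) -
        min (P.t (k + 1)) (max (P.t k) (Q.t j)) := by
    intro j hj
    exact (clamp_diff (P.mono k hk).le (Q.mono j (Finset.mem_range.1 hj)).le).symm
  rw [Finset.sum_congr rfl e,
    Finset.sum_range_sub (fun j => min (P.t (k + 1)) (max (P.t k) (Q.t j))), Q.tn, Q.t0,
    max_eq_right (P.t_le_one hk.le), min_eq_left (P.t_le_one hk),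
    max_eq_left (P.t_nonneg hk.le), min_eq_right (P.mono k hk).le]

lemma key {A B : IR} (h : sll A B) {g : IR → ℝ} {c d : ℝ}
    (hg : ∀ X ∈ box A B, c ≤ g X ∧ g X ≤ d) (P Q : Partition) :
    ∑ k ∈ Finset.range P.n, (P.t (k + 1) - P.t k) *
        sInf (g '' box (seg A B (P.t k)) (seg A B (P.t (k + 1)))) ≤
    ∑ j ∈ Finset.range Q.n, (Q.t (j + 1) - Q.t j) *
        sSup (g '' box (seg A B (Q.t j)) (seg A B (Q.t (j + 1)))) := by
  have step : ∀ k ∈ Finset.range P.n, ∀ j ∈ Finset.range Q.n,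
      ell P.t Q.t k j * sInf (g '' box (seg A B (P.t k)) (seg A B (P.t (k + 1)))) ≤
      ell P.t Q.t k j * sSup (g '' box (seg A B (Q.t j)) (seg A B (Q.t (j + 1)))) := by
    intro k hk j hj
    rw [Finset.mem_range] at hk hj
    rcases eq_or_lt_of_le (ell_nonneg P.t Q.t k j) with he | hpos
    · rw [← he, zero_mul, zero_mul]
    · have hx : 0 < min (P.t (k + 1)) (Q.t (j + 1)) - max (P.t k) (Q.t j) := by
        unfold ell at hpos
        rcases lt_max_iff.1 hpos with h' | h'
        · exact absurd h' (lt_irrefl 0)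
        · exact h'
      set x := max (P.t k) (Q.t j) with hxdef
      have hx1 : P.t k ≤ x := le_max_left _ _
      have hx2 : Q.t j ≤ x := le_max_right _ _
      have hx3 : x ≤ P.t (k + 1) := le_trans (by linarith) (min_le_left _ _)
      have hx4 : x ≤ Q.t (j + 1) := le_trans (by linarith) (min_le_right _ _)
      have hb1 := (bounds_on h hg (P.t_nonneg hk.le) (P.mono k hk).le (P.t_le_one hk)).2 x hx1 hx3
      have hb2 := (bounds_on h hg (Q.t_nonneg hj.le) (Q.mono j hj).le (Q.t_le_one hj)).2 x hx2 hx4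
      exact mul_le_mul_of_nonneg_left (hb1.1.trans hb2.2) (ell_nonneg P.t Q.t k j)
  calc
    ∑ k ∈ Finset.range P.n, (P.t (k + 1) - P.t k) *
        sInf (g '' box (seg A B (P.t k)) (seg A B (P.t (k + 1))))
      = ∑ k ∈ Finset.range P.n, ∑ j ∈ Finset.range Q.n,
          ell P.t Q.t k j * sInf (g '' box (seg A B (P.t k)) (seg A B (P.t (k + 1)))) := by
        refine Finset.sum_congr rfl fun k hk => ?_
        rw [← Finset.sum_mul, ell_sum P Q (Finset.mem_range.1 hk)]
    _ ≤ ∑ k ∈ Finset.range P.n, ∑ j ∈ Finset.range Q.n,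
          ell P.t Q.t k j * sSup (g '' box (seg A B (Q.t j)) (seg A B (Q.t (j + 1)))) := by
        refine Finset.sum_le_sum fun k hk => Finset.sum_le_sum fun j hj => step k hk j hj
    _ = ∑ j ∈ Finset.range Q.n, ∑ k ∈ Finset.range P.n,
          ell P.t Q.t k j * sSup (g '' box (seg A B (Q.t j)) (seg A B (Q.t (j + 1)))) :=
        Finset.sum_comm
    _ = ∑ j ∈ Finset.range Q.n, (Q.t (j + 1) - Q.t j) *
          sSup (g '' box (seg A B (Q.t j)) (seg A B (Q.t (j + 1)))) := by
        refine Finset.sum_congr rfl fun j hj => ?_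
        rw [← Finset.sum_mul]
        congr 1
        calc ∑ k ∈ Finset.range P.n, ell P.t Q.t k j
            = ∑ k ∈ Finset.range P.n, ell Q.t P.t j k :=
              Finset.sum_congr rfl fun k _ => ell_comm P.t Q.t k j
          _ = Q.t (j + 1) - Q.t j := ell_sum Q P (Finset.mem_range.1 hj)


noncomputable def lsum (A B : IR) (g : IR → ℝ) (P : Partition) : ℝ :=
  ∑ k ∈ Finset.range P.n, dM (seg A B (P.t k)) (seg A B (P.t (k + 1))) *
    sInf (g '' box (seg A B (P.t k)) (seg A B (P.t (k + 1))))

noncomputable def usum (A B : IR) (g : IR → ℝ) (P : Partition) : ℝ :=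
  ∑ k ∈ Finset.range P.n, dM (seg A B (P.t k)) (seg A B (P.t (k + 1))) *
    sSup (g '' box (seg A B (P.t k)) (seg A B (P.t (k + 1))))

lemma lowerSum_fst (A B : IR) (F : IR → IR) (P : Partition) :
    (lowerSum A B F P).1 = lsum A B (fun X => lo (F X)) P := by
  unfold lowerSum lsum infS
  rw [Prod.fst_sum]
  refine Finset.sum_congr rfl fun k _ => ?_
  rw [Prod.smul_fst, smul_eq_mul, Set.image_image]

lemma lowerSum_snd (A B : IR) (F : IR → IR) (P : Partition) :
    (lowerSum A B F P).2 = lsum A B (fun X => hi (F X)) P := by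
  unfold lowerSum lsum infS
  rw [Prod.snd_sum]
  refine Finset.sum_congr rfl fun k _ => ?_
  simp only [Prod.smul_snd, smul_eq_mul, Set.image_image]

lemma upperSum_fst (A B : IR) (F : IR → IR) (P : Partition) :
    (upperSum A B F P).1 = usum A B (fun X => lo (F X)) P := by
  unfold upperSum usum supS
  rw [Prod.fst_sum]
  refine Finset.sum_congr rfl fun k _ => ?_
  rw [Prod.smul_fst, smul_eq_mul, Set.image_image]

lemma upperSum_snd (A B : IR) (F : IR → IR) (P : Partition) :
    (upperSum A B F P).2 = usum A B (fun X => hi (F X)) P := by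
  unfold upperSum usum supS
  rw [Prod.snd_sum]
  refine Finset.sum_congr rfl fun k _ => ?_
  simp only [Prod.smul_snd, smul_eq_mul, Set.image_image]

lemma lsum_eq {A B : IR} (h : sll A B) (g : IR → ℝ) (P : Partition) :
    lsum A B g P = dM A B * ∑ k ∈ Finset.range P.n, (P.t (k + 1) - P.t k) *
      sInf (g '' box (seg A B (P.t k)) (seg A B (P.t (k + 1)))) := by
  unfold lsum
  rw [Finset.mul_sum]
  refine Finset.sum_congr rfl fun k hk => ?_
  rw [Finset.mem_range] at hk
  rw [dM_seg h (P.t_nonneg hk.le) (P.mono k hk).le (P.t_le_one hk)]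
  ring

lemma usum_eq {A B : IR} (h : sll A B) (g : IR → ℝ) (P : Partition) :
    usum A B g P = dM A B * ∑ k ∈ Finset.range P.n, (P.t (k + 1) - P.t k) *
      sSup (g '' box (seg A B (P.t k)) (seg A B (P.t (k + 1)))) := by
  unfold usum
  rw [Finset.mul_sum]
  refine Finset.sum_congr rfl fun k hk => ?_
  rw [Finset.mem_range] at hk
  rw [dM_seg h (P.t_nonneg hk.le) (P.mono k hk).le (P.t_le_one hk)]
  ring

lemma lsum_le_usum {A B : IR} (h : sll A B) {g : IR → ℝ} {c d : ℝ}
    (hg : ∀ X ∈ box A B, c ≤ g X ∧ g X ≤ d) (P Q : Partition) :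
    lsum A B g P ≤ usum A B g Q := by
  rw [lsum_eq h g P, usum_eq h g Q]
  exact mul_le_mul_of_nonneg_left (key h hg P Q) (dM_nonneg A B)

lemma lsum_ge {A B : IR} (h : sll A B) {g : IR → ℝ} {c d : ℝ}
    (hg : ∀ X ∈ box A B, c ≤ g X ∧ g X ≤ d) (P : Partition) :
    dM A B * c ≤ lsum A B g P := by
  rw [lsum_eq h g P]
  refine mul_le_mul_of_nonneg_left ?_ (dM_nonneg A B)
  have e : c = ∑ k ∈ Finset.range P.n, (P.t (k + 1) - P.t k) * c := by
    rw [← Finset.sum_mul, Finset.sum_range_sub P.t, P.tn, P.t0]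
    ring
  rw [e]
  refine Finset.sum_le_sum fun k hk => ?_
  rw [Finset.mem_range] at hk
  exact mul_le_mul_of_nonneg_left
    ((bounds_on h hg (P.t_nonneg hk.le) (P.mono k hk).le (P.t_le_one hk)).1.1)
    (sub_nonneg.2 (P.mono k hk).le)

lemma usum_le {A B : IR} (h : sll A B) {g : IR → ℝ} {c d : ℝ}
    (hg : ∀ X ∈ box A B, c ≤ g X ∧ g X ≤ d) (P : Partition) :
    usum A B g P ≤ dM A B * d := by
  rw [usum_eq h g P]
  refine mul_le_mul_of_nonneg_left ?_ (dM_nonneg A B)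
  have e : d = ∑ k ∈ Finset.range P.n, (P.t (k + 1) - P.t k) * d := by
    rw [← Finset.sum_mul, Finset.sum_range_sub P.t, P.tn, P.t0]
    ring
  rw [e]
  refine Finset.sum_le_sum fun k hk => ?_
  rw [Finset.mem_range] at hk
  exact mul_le_mul_of_nonneg_left
    ((bounds_on h hg (P.t_nonneg hk.le) (P.mono k hk).le (P.t_le_one hk)).1.2)
    (sub_nonneg.2 (P.mono k hk).le)

lemma chain {A B : IR} (h : sll A B) {g : IR → ℝ} {c d : ℝ}
    (hg : ∀ X ∈ box A B, c ≤ g X ∧ g X ≤ d) (P : Partition) :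
    dM A B * c ≤ lsum A B g P ∧
    lsum A B g P ≤ sSup (Set.range fun Q => lsum A B g Q) ∧
    sSup (Set.range fun Q => lsum A B g Q) ≤ sInf (Set.range fun Q => usum A B g Q) ∧
    sInf (Set.range fun Q => usum A B g Q) ≤ usum A B g P ∧
    usum A B g P ≤ dM A B * d := by
  have hba : BddAbove (Set.range fun Q => lsum A B g Q) :=
    ⟨usum A B g P, by rintro x ⟨Q, rfl⟩; exact lsum_le_usum h hg Q P⟩
  have hbb : BddBelow (Set.range fun Q => usum A B g Q) :=
    ⟨lsum A B g P, by rintro x ⟨Q, rfl⟩; exact lsum_le_usum h hg P Q⟩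
  refine ⟨lsum_ge h hg P, le_csSup hba ⟨P, rfl⟩, ?_, csInf_le hbb ⟨P, rfl⟩, usum_le h hg P⟩
  refine csSup_le ⟨lsum A B g P, ⟨P, rfl⟩⟩ ?_
  rintro x ⟨Q, rfl⟩
  refine le_csInf ⟨usum A B g P, ⟨P, rfl⟩⟩ ?_
  rintro y ⟨R, rfl⟩
  exact lsum_le_usum h hg Q R

end IR

open IR in
/-- Let `A ≪ B` and `C ≤ F(X) ≤ D` for all `X ∈ 𝕀_{[A,B]}`.  Then for every
partition `𝒫` of `𝕀_{[A,B]}`: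
`C·d_M(A,B) ≤ σ(F,𝒫) ≤ ∫̲_A^B F ≤ ∫̄_A^B F ≤ Σ(F,𝒫) ≤ D·d_M(A,B)`. -/
theorem IR.integral_bounds (A B : IR) (h : sll A B) (F : IR → IR) (C D : IR)
    (hF : ∀ X ∈ box A B, C ≤ F X ∧ F X ≤ D) (P : Partition) :
    dM A B • C.val ≤ lowerSum A B F P ∧
    lowerSum A B F P ≤ lowerInt A B F ∧
    lowerInt A B F ≤ upperInt A B F ∧
    upperInt A B F ≤ upperSum A B F P ∧
    upperSum A B F P ≤ dM A B • D.val := by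
  have hg1 : ∀ X ∈ box A B, C.val.1 ≤ lo (F X) ∧ lo (F X) ≤ D.val.1 := fun X hX =>
    ⟨((hF X hX).1 : C.val ≤ (F X).val).1, ((hF X hX).2 : (F X).val ≤ D.val).1⟩
  have hg2 : ∀ X ∈ box A B, C.val.2 ≤ hi (F X) ∧ hi (F X) ≤ D.val.2 := fun X hX =>
    ⟨((hF X hX).1 : C.val ≤ (F X).val).2, ((hF X hX).2 : (F X).val ≤ D.val).2⟩
  have ch1 := chain h hg1 P
  have ch2 := chain h hg2 P
  have eL1 : (Set.range fun Q : Partition => (lowerSum A B F Q).1) =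
      Set.range fun Q => lsum A B (fun X => lo (F X)) Q :=
    congrArg Set.range (funext fun Q => lowerSum_fst A B F Q)
  have eL2 : (Set.range fun Q : Partition => (lowerSum A B F Q).2) =
      Set.range fun Q => lsum A B (fun X => hi (F X)) Q :=
    congrArg Set.range (funext fun Q => lowerSum_snd A B F Q)
  have eU1 : (Set.range fun Q : Partition => (upperSum A B F Q).1) =
      Set.range fun Q => usum A B (fun X => lo (F X)) Q :=
    congrArg Set.range (funext fun Q => upperSum_fst A B F Q)
  have eU2 : (Set.range fun Q : Partition => (upperSum A B F Q).2) =
      Set.range fun Q => usum A B (fun X => hi (F X)) Q :=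
    congrArg Set.range (funext fun Q => upperSum_snd A B F Q)
  refine ⟨?_, ?_, ?_, ?_, ?_⟩
  · rw [Prod.le_def, Prod.smul_fst, Prod.smul_snd, smul_eq_mul, smul_eq_mul,
      lowerSum_fst, lowerSum_snd]
    exact ⟨ch1.1, ch2.1⟩
  · rw [Prod.le_def, lowerSum_fst, lowerSum_snd]
    unfold lowerInt
    rw [eL1, eL2]
    exact ⟨ch1.2.1, ch2.2.1⟩
  · rw [Prod.le_def]
    unfold lowerInt upperInt
    rw [eL1, eL2, eU1, eU2]
    exact ⟨ch1.2.2.1, ch2.2.2.1⟩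
  · rw [Prod.le_def, upperSum_fst, upperSum_snd]
    unfold upperInt
    rw [eU1, eU2]
    exact ⟨ch1.2.2.2.1, ch2.2.2.2.1⟩
  · rw [Prod.le_def, Prod.smul_fst, Prod.smul_snd, smul_eq_mul, smul_eq_mul,
      upperSum_fst, upperSum_snd]
    exact ⟨ch1.2.2.2.2, ch2.2.2.2.2⟩
end

section
/- Let A ≪ B in 𝕀ℝ and let g : 𝕀_{[A,B]} → ℝ be continuous with respect to the Moore metric d_M. For n ≥ 1 and 0 ≤ k ≤ n set X_k^{(n)} = A + (k/n)(B−A) = [a̲ + (k/n)(b̲−a̲), ā + (k/n)(b̄−ā)]. Then lim_{n→∞} (1/n) Σ_{k=0}^{n−1} inf{g(X) : X_k^{(n)} ≤ X ≤ X_{k+1}^{(n)}} and lim_{n→∞} (1/n) Σ_{k=0}^{n−1} g(X_k^{(n)}) both exist and are equal to ∫₀¹ g(A + t(B−A)) dt. -/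
open Filter Topology Set Finset

theorem abs_one_div_mul_sum_le {n : ℕ} {w : ℕ → ℝ} {ε : ℝ} (hε : 0 ≤ ε)
    (hw : ∀ k < n, |w k| ≤ ε) : |1 / (n : ℝ) * ∑ k ∈ range n, w k| ≤ ε := by
  rcases Nat.eq_zero_or_pos n with rfl | hn
  · simpa using hε
  have hn' : (0 : ℝ) < n := by exact_mod_cast hn
  calc |1 / (n : ℝ) * ∑ k ∈ range n, w k|
      ≤ 1 / n * ∑ k ∈ range n, |w k| := by
        rw [abs_mul, abs_of_pos (by positivity)]
        gcongr
        exact abs_sum_le_sum_abs _ _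
    _ ≤ 1 / n * (n * ε) := by
        gcongr
        simpa using sum_le_card_nsmul (range n) (fun k => |w k|) ε
          (fun k hk => hw k (mem_range.mp hk))
    _ = ε := by field_simp

theorem tendsto_one_div_mul_sum_of_abs_sub_le {u v : ℕ → ℕ → ℝ} {L : ℝ}
    (hv : Tendsto (fun n : ℕ => 1 / (n : ℝ) * ∑ k ∈ range n, v n k) atTop (𝓝 L))
    (huv : ∀ ε > 0, ∀ᶠ n in atTop, ∀ k < n, |u n k - v n k| ≤ ε) :
    Tendsto (fun n : ℕ => 1 / (n : ℝ) * ∑ k ∈ range n, u n k) atTop (𝓝 L) := by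
  have hdiff : Tendsto (fun n : ℕ => 1 / (n : ℝ) * ∑ k ∈ range n, (u n k - v n k))
      atTop (𝓝 0) := by
    rw [Metric.tendsto_nhds]
    intro ε hε
    filter_upwards [huv (ε / 2) (half_pos hε)] with n hn
    rw [Real.dist_0_eq_abs]
    exact (abs_one_div_mul_sum_le (half_pos hε).le hn).trans_lt (half_lt_self hε)
  simpa [sum_sub_distrib, mul_sub] using hv.add hdiff

theorem abs_csInf_sub_le {T : Set ℝ} {a ε : ℝ} (ha : a ∈ T) (hT : ∀ y ∈ T, |y - a| ≤ ε) :
    |sInf T - a| ≤ ε := by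
  have hlow : ∀ y ∈ T, a - ε ≤ y := fun y hy => by linarith [(abs_le.mp (hT y hy)).1]
  rw [abs_le]
  constructor
  · linarith [le_csInf ⟨a, ha⟩ hlow]
  · linarith [csInf_le ⟨a - ε, hlow⟩ ha, (abs_le.mp (hT a ha)).1]

theorem UniformContinuousOn.eventually_abs_sub_le {α : Type*} [PseudoMetricSpace α]
    {f : α → ℝ} {s : Set α} (hf : UniformContinuousOn f s) (c : ℝ) {ε : ℝ} (hε : 0 < ε) :
    ∀ᶠ n : ℕ in atTop, ∀ x ∈ s, ∀ y ∈ s, dist x y ≤ c / n → |f x - f y| ≤ ε := by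
  obtain ⟨δ, hδ, hfδ⟩ := Metric.uniformContinuousOn_iff.mp hf ε hε
  filter_upwards [(tendsto_const_div_atTop_nhds_zero_nat c).eventually (gt_mem_nhds hδ)]
    with n hn x hx y hy hxy
  exact (hfδ x hx y hy (hxy.trans_lt hn)).le

theorem abs_integral_sub_mul_le {φ : ℝ → ℝ} {a b c ε : ℝ} (hab : a ≤ b)
    (hφ : IntervalIntegrable φ MeasureTheory.volume a b)
    (hclose : ∀ t ∈ Icc a b, |φ t - c| ≤ ε) :
    |(∫ t in a..b, φ t) - (b - a) * c| ≤ ε * (b - a) := by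
  have h := intervalIntegral.norm_integral_le_of_norm_le_const (a := a) (b := b) (C := ε)
    (f := fun t => φ t - c) fun t ht => by
      rw [uIoc_of_le hab] at ht
      exact hclose t (Ioc_subset_Icc_self ht)
  rwa [intervalIntegral.integral_sub hφ intervalIntegrable_const, intervalIntegral.integral_const,
    smul_eq_mul, abs_of_nonneg (sub_nonneg.mpr hab), Real.norm_eq_abs] at h

theorem div_and_succ_div_mem_Icc {n k : ℕ} (hk : k < n) :
    (k : ℝ) / n ∈ Icc (0 : ℝ) 1 ∧ ((k : ℝ) + 1) / n ∈ Icc (0 : ℝ) 1 ∧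
      (k : ℝ) / n ≤ ((k : ℝ) + 1) / n := by
  have hn : (0 : ℝ) < n := by exact_mod_cast (Nat.zero_le k).trans_lt hk
  have hkn : (k : ℝ) + 1 ≤ n := by exact_mod_cast hk
  refine ⟨⟨by positivity, (div_le_one hn).mpr (by linarith)⟩, ⟨by positivity,
    (div_le_one hn).mpr hkn⟩, by gcongr; linarith⟩

theorem sum_integral_div_eq {φ : ℝ → ℝ} (hφ : ContinuousOn φ (Icc 0 1)) {n : ℕ} (hn : 0 < n) :
    ∑ k ∈ range n, ∫ t in (k : ℝ) / n..((k : ℝ) + 1) / n, φ t = ∫ t in (0 : ℝ)..1, φ t := by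
  have hn' : (n : ℝ) ≠ 0 := by exact_mod_cast hn.ne'
  have h := intervalIntegral.sum_integral_adjacent_intervals (a := fun k : ℕ => (k : ℝ) / n)
    (f := φ) (μ := MeasureTheory.volume) (n := n) fun k hk => by
      obtain ⟨hk₀, hk₁, hle⟩ := div_and_succ_div_mem_Icc hk
      push_cast
      exact (hφ.mono (by rw [uIcc_of_le hle]; exact Icc_subset_Icc hk₀.1 hk₁.2)).intervalIntegrable
  simpa [hn'] using h

theorem tendsto_one_div_mul_sum_div_of_continuousOn {φ : ℝ → ℝ}
    (hφ : ContinuousOn φ (Icc 0 1)) :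
    Tendsto (fun n : ℕ => 1 / (n : ℝ) * ∑ k ∈ range n, φ ((k : ℝ) / n)) atTop
      (𝓝 (∫ t in (0 : ℝ)..1, φ t)) := by
  -- `v n k` is `n` times the mean of `φ` over the `k`-th cell, so its average is `∫₀¹ φ`.
  set v : ℕ → ℕ → ℝ := fun n k => n * ∫ t in (k : ℝ) / n..((k : ℝ) + 1) / n, φ t
  have hv : ∀ᶠ n : ℕ in atTop, ∫ t in (0 : ℝ)..1, φ t = 1 / (n : ℝ) * ∑ k ∈ range n, v n k := by
    filter_upwards [eventually_gt_atTop 0] with n hn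
    have hn' : (n : ℝ) ≠ 0 := by exact_mod_cast hn.ne'
    simp only [v, ← mul_sum, sum_integral_div_eq hφ hn]
    field_simp
  refine tendsto_one_div_mul_sum_of_abs_sub_le (tendsto_const_nhds.congr' hv) fun ε hε => ?_
  have hUC := isCompact_Icc.uniformContinuousOn_of_continuous hφ
  filter_upwards [hUC.eventually_abs_sub_le 1 hε] with n hclose k hk
  obtain ⟨hk₀, hk₁, hle⟩ := div_and_succ_div_mem_Icc hk
  have hn : (0 : ℝ) < n := by exact_mod_cast (Nat.zero_le k).trans_lt hk
  have hwidth : ((k : ℝ) + 1) / n - k / n = 1 / n := by ring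
  have hcell := abs_integral_sub_mul_le hle
    ((hφ.mono (Icc_subset_Icc hk₀.1 hk₁.2)).intervalIntegrable_of_Icc hle)
    (c := φ (k / n)) (ε := ε) fun t ht => by
      refine hclose t ⟨hk₀.1.trans ht.1, ht.2.trans hk₁.2⟩ _ hk₀ ?_
      rw [Real.dist_eq, abs_of_nonneg (sub_nonneg.mpr ht.1)]
      linarith [ht.2]
  rw [hwidth] at hcell
  calc |φ (k / n) - v n k|
        = n * |(∫ t in (k : ℝ) / n..((k : ℝ) + 1) / n, φ t) - 1 / n * φ (k / n)| := by
        rw [← abs_of_pos hn, ← abs_mul, abs_of_pos hn, abs_sub_comm]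
        congr 1
        simp only [v]
        field_simp
    _ ≤ n * (ε * (1 / n)) := by gcongr
    _ = ε := by field_simp

namespace IR

theorem seg_val_eq_lineMap (A B : IR) {t : ℝ} (ht : t ∈ Icc (0 : ℝ) 1) :
    (seg A B t).val = AffineMap.lineMap A.val B.val t := by
  have hA : lo A ≤ hi A := A.2
  have hB : lo B ≤ hi B := B.2
  have hle : lo A + t * (lo B - lo A) ≤ hi A + t * (hi B - hi A) := by
    nlinarith [mul_nonneg ht.1 (sub_nonneg.mpr hB),
      mul_nonneg (sub_nonneg.mpr ht.2) (sub_nonneg.mpr hA)]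
  rw [seg, mkI, dif_pos hle]
  ext <;> simp [AffineMap.lineMap_apply_module', lo, hi] <;> ring

theorem dist_seg_seg (A B : IR) {s t : ℝ} (hs : s ∈ Icc (0 : ℝ) 1) (ht : t ∈ Icc (0 : ℝ) 1) :
    dist (seg A B s) (seg A B t) = dist s t * dist A B := by
  rw [Subtype.dist_eq, seg_val_eq_lineMap A B hs, seg_val_eq_lineMap A B ht, dist_lineMap_lineMap,
    Subtype.dist_eq]

theorem seg_zero (A B : IR) : seg A B 0 = A :=
  Subtype.ext <| by simp [seg_val_eq_lineMap A B (left_mem_Icc.mpr zero_le_one)]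

theorem seg_one (A B : IR) : seg A B 1 = B :=
  Subtype.ext <| by simp [seg_val_eq_lineMap A B (right_mem_Icc.mpr zero_le_one)]

theorem monotoneOn_seg {A B : IR} (hAB : A ≤ B) : MonotoneOn (seg A B) (Icc 0 1) := by
  intro s hs t ht hst
  rw [← Subtype.coe_le_coe, seg_val_eq_lineMap A B hs, seg_val_eq_lineMap A B ht]
  exact AffineMap.lineMap_mono (p₀ := A.val) (p₁ := B.val) hAB hst

theorem seg_mem_box_s12 {A B : IR} (hAB : A ≤ B) {t : ℝ} (ht : t ∈ Icc (0 : ℝ) 1) :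
    seg A B t ∈ box A B := by
  constructor
  · simpa [seg_zero] using monotoneOn_seg hAB (left_mem_Icc.mpr zero_le_one) ht ht.1
  · simpa [seg_one] using monotoneOn_seg hAB ht (right_mem_Icc.mpr zero_le_one) ht.2

theorem box_seg_subset_box {A B : IR} (hAB : A ≤ B) {s t : ℝ} (hs : s ∈ Icc (0 : ℝ) 1)
    (ht : t ∈ Icc (0 : ℝ) 1) : box (seg A B s) (seg A B t) ⊆ box A B :=
  fun _ hX => ⟨(seg_mem_box_s12 hAB hs).1.trans hX.1, hX.2.trans (seg_mem_box_s12 hAB ht).2⟩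

theorem continuousOn_seg (A B : IR) : ContinuousOn (seg A B) (Icc 0 1) := by
  refine Topology.IsInducing.subtypeVal.continuousOn_iff.mpr ?_
  exact (AffineMap.lineMap_continuous (p := A.val) (q := B.val)).continuousOn.congr
    fun t ht => seg_val_eq_lineMap A B ht

theorem isCompact_box (A B : IR) : IsCompact (box A B) := by
  have hbox : box A B = Subtype.val ⁻¹' Icc A.val B.val := rfl
  rw [hbox]
  exact (isClosed_le continuous_fst continuous_snd).isClosedEmbedding_subtypeVal.isCompact_preimage
    isCompact_Icc

theorem dist_le_of_mem_box {P Q X : IR} (hX : X ∈ box P Q) : dist X P ≤ dist Q P := by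
  have hreal : ∀ {a x b : ℝ}, a ≤ x → x ≤ b → dist x a ≤ dist b a := fun hax hxb =>
    (Real.dist_le_of_mem_Icc ⟨hax, hxb⟩ (left_mem_Icc.mpr (hax.trans hxb))).trans
      (Real.dist_eq _ _ ▸ le_abs_self _)
  obtain ⟨⟨hlo₁, hhi₁⟩, ⟨hlo₂, hhi₂⟩⟩ := hX
  rw [Subtype.dist_eq, Subtype.dist_eq, Prod.dist_eq, Prod.dist_eq]
  exact max_le_max (hreal hlo₁ hlo₂) (hreal hhi₁ hhi₂)

end IR

open IR in
/-- Let `A ≪ B` and `g : 𝕀_{[A,B]} → ℝ` be continuous w.r.t. the Moore metric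
(the metric of `IR`).  With `X_k^{(n)} = A + (k/n)(B−A)`, both
`(1/n) Σ_{k<n} inf{g(X) : X_k^{(n)} ≤ X ≤ X_{k+1}^{(n)}}` and
`(1/n) Σ_{k<n} g(X_k^{(n)})` converge, as `n → ∞`, to
`∫₀¹ g(A + t(B−A)) dt`. -/
theorem IR.riemann_limits (A B : IR) (h : sll A B) (g : IR → ℝ)
    (hg : ContinuousOn g (box A B)) :
    Filter.Tendsto
      (fun n : ℕ => (1 / (n : ℝ)) * ∑ k ∈ Finset.range n,
        sInf (g '' box (seg A B ((k : ℝ) / n)) (seg A B (((k : ℝ) + 1) / n))))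
      Filter.atTop (nhds (∫ t in (0 : ℝ)..1, g (seg A B t))) ∧
    Filter.Tendsto
      (fun n : ℕ => (1 / (n : ℝ)) * ∑ k ∈ Finset.range n, g (seg A B ((k : ℝ) / n)))
      Filter.atTop (nhds (∫ t in (0 : ℝ)..1, g (seg A B t))) := by
  have hAB : A ≤ B := Prod.le_def.mpr ⟨h.1.le, h.2.le⟩
  have hpoint := tendsto_one_div_mul_sum_div_of_continuousOn
    (hg.comp (continuousOn_seg A B) fun _ ht => seg_mem_box_s12 hAB ht)
  refine ⟨tendsto_one_div_mul_sum_of_abs_sub_le hpoint fun ε hε => ?_, hpoint⟩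
  filter_upwards [((isCompact_box A B).uniformContinuousOn_of_continuous hg).eventually_abs_sub_le
    (dist A B) hε] with n hclose k hk
  obtain ⟨hk₀, hk₁, hle⟩ := div_and_succ_div_mem_Icc hk
  have hleft : seg A B (k / n) ∈ box (seg A B (k / n)) (seg A B ((k + 1) / n)) :=
    ⟨le_rfl, monotoneOn_seg hAB hk₀ hk₁ hle⟩
  refine abs_csInf_sub_le (mem_image_of_mem g hleft) ?_
  rintro _ ⟨X, hX, rfl⟩
  refine hclose X (box_seg_subset_box hAB hk₀ hk₁ hX) _ (seg_mem_box_s12 hAB hk₀) ?_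
  calc dist X (seg A B (k / n)) ≤ dist (seg A B ((k + 1) / n)) (seg A B (k / n)) :=
        dist_le_of_mem_box hX
    _ = dist A B / n := by
        rw [dist_seg_seg A B hk₁ hk₀, Real.dist_eq, abs_of_nonneg (sub_nonneg.mpr hle)]
        ring
end

section
/- (Moore–Yang characterization theorem) Let a < b be real numbers and let F : {X ∈ 𝕀ℝ : X ⊆ [a,b]} → 𝕀ℝ be continuous with respect to the Moore metric d_M and inclusion monotonic (X ⊆ Y implies F(X) ⊆ F(Y)). For a partition T = {a = x₀ < x₁ < ⋯ < x_n = b} of [a,b], let Σ(F,T) = Σ_{k=0}^{n−1} F([x_k,x_{k+1}])·(x_{k+1}−x_k), computed with interval arithmetic (so Σ(F,T) = [Σ_k π₁F([x_k,x_{k+1}])(x_{k+1}−x_k), Σ_k π₂F([x_k,x_{k+1}])(x_{k+1}−x_k)]). Then the intersection, taken over all partitions T of [a,b], of the sets Σ(F,T) ⊆ ℝ equals the interval [∫_a^b f_l(x)dx, ∫_a^b f_r(x)dx], where f_l(x) = π₁ F([x,x]) and f_r(x) = π₂ F([x,x]). -/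
/-- A partition `a = x₀ < x₁ < ⋯ < x_n = b` of the real interval `[a,b]`. -/
structure RChain (a b : ℝ) where
  n : ℕ
  npos : 0 < n
  x : ℕ → ℝ
  x0 : x 0 = a
  xn : x n = b
  mono : ∀ i < n, x i < x (i + 1)

/-- The Riemann sum `Σ(F,T) = Σ_k F([x_k,x_{k+1}])·(x_{k+1}−x_k)` computed with
interval arithmetic, as a pair of endpoints. -/
noncomputable def mooreSum {a b : ℝ} (F : IR → IR) (T : RChain a b) : ℝ × ℝ :=
  ∑ k ∈ Finset.range T.n,
    (T.x (k + 1) - T.x k) • (F (IR.mkI (T.x k) (T.x (k + 1)))).val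

/-!
If `x ∈ [xₖ, xₖ₊₁]`, inclusion monotonicity gives `F([x,x]) ⊆ F([xₖ,xₖ₊₁])`; integrating `f_l`
and `f_r` over each subinterval shows that every `Σ(F,T)` contains `[∫ f_l, ∫ f_r]`.
Conversely, `F` is uniformly continuous on the compact set of intervals contained in `[a,b]`,
so on a fine uniform partition each `F([xₖ,xₖ₊₁])` is `ε`-close to `F([x,x])` for all
`x ∈ [xₖ, xₖ₊₁]`, and `Σ(F,T)` lies within `ε (b - a)` of `[∫ f_l, ∫ f_r]`.
-/

open Set MeasureTheory

namespace RChain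

variable {a b : ℝ} (T : RChain a b)

lemma strictMonoOn_x : StrictMonoOn T.x (Iic T.n) :=
  strictMonoOn_Iic_of_lt_succ fun m hm => T.mono m hm

lemma x_mem_Icc {k : ℕ} (hk : k ≤ T.n) : T.x k ∈ Icc a b := by
  have hmono := T.strictMonoOn_x.monotoneOn
  constructor
  · exact T.x0.symm.le.trans (hmono (mem_Iic.2 (Nat.zero_le _)) hk (Nat.zero_le k))
  · exact (hmono hk (mem_Iic.2 le_rfl) hk).trans T.xn.le

lemma le (T : RChain a b) : a ≤ b := (T.x_mem_Icc le_rfl).1.trans (T.x_mem_Icc le_rfl).2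

lemma Icc_subset {k : ℕ} (hk : k < T.n) : Icc (T.x k) (T.x (k + 1)) ⊆ Icc a b :=
  Icc_subset_Icc (T.x_mem_Icc hk.le).1 (T.x_mem_Icc hk).2

noncomputable def riemannSum (φ : ℝ → ℝ → ℝ) : ℝ :=
  ∑ k ∈ Finset.range T.n, (T.x (k + 1) - T.x k) * φ (T.x k) (T.x (k + 1))

variable {T} {f : ℝ → ℝ} {φ : ℝ → ℝ → ℝ}

lemma intervalIntegrable_piece (hf : IntervalIntegrable f volume a b) {k : ℕ} (hk : k < T.n) :
    IntervalIntegrable f volume (T.x k) (T.x (k + 1)) :=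
  hf.mono_set (by rw [uIcc_of_le T.le, uIcc_of_le (T.mono k hk).le]; exact T.Icc_subset hk)

lemma integral_eq_sum (hf : IntervalIntegrable f volume a b) :
    ∫ x in a..b, f x = ∑ k ∈ Finset.range T.n, ∫ x in T.x k..T.x (k + 1), f x := by
  rw [intervalIntegral.sum_integral_adjacent_intervals (a := T.x)
    fun k hk => intervalIntegrable_piece hf hk, T.x0, T.xn]

lemma riemannSum_le_integral (hf : IntervalIntegrable f volume a b)
    (h : ∀ k < T.n, ∀ x ∈ Icc (T.x k) (T.x (k + 1)), φ (T.x k) (T.x (k + 1)) ≤ f x) :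
    T.riemannSum φ ≤ ∫ x in a..b, f x := by
  rw [integral_eq_sum hf, riemannSum]
  refine Finset.sum_le_sum fun k hk => ?_
  rw [Finset.mem_range] at hk
  rw [← smul_eq_mul, ← intervalIntegral.integral_const]
  exact intervalIntegral.integral_mono_on (T.mono k hk).le intervalIntegrable_const
    (intervalIntegrable_piece hf hk) (h k hk)

lemma integral_le_riemannSum (hf : IntervalIntegrable f volume a b)
    (h : ∀ k < T.n, ∀ x ∈ Icc (T.x k) (T.x (k + 1)), f x ≤ φ (T.x k) (T.x (k + 1))) :
    ∫ x in a..b, f x ≤ T.riemannSum φ := by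
  rw [integral_eq_sum hf, riemannSum]
  refine Finset.sum_le_sum fun k hk => ?_
  rw [Finset.mem_range] at hk
  rw [← smul_eq_mul, ← intervalIntegral.integral_const]
  exact intervalIntegral.integral_mono_on (T.mono k hk).le (intervalIntegrable_piece hf hk)
    intervalIntegrable_const (h k hk)

lemma riemannSum_le_integral_add (hf : IntervalIntegrable f volume a b) {ε : ℝ}
    (h : ∀ k < T.n, ∀ x ∈ Icc (T.x k) (T.x (k + 1)), φ (T.x k) (T.x (k + 1)) ≤ f x + ε) :
    T.riemannSum φ ≤ (∫ x in a..b, f x) + ε * (b - a) := by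
  have := riemannSum_le_integral (hf.add intervalIntegrable_const) h
  rwa [intervalIntegral.integral_add hf intervalIntegrable_const, intervalIntegral.integral_const,
    smul_eq_mul, mul_comm (b - a)] at this

lemma integral_le_riemannSum_add (hf : IntervalIntegrable f volume a b) {ε : ℝ}
    (h : ∀ k < T.n, ∀ x ∈ Icc (T.x k) (T.x (k + 1)), f x ≤ φ (T.x k) (T.x (k + 1)) + ε) :
    ∫ x in a..b, f x ≤ T.riemannSum φ + ε * (b - a) := by
  have := integral_le_riemannSum (hf.sub intervalIntegrable_const)
    fun k hk x hx => sub_le_iff_le_add.2 (h k hk x hx)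
  rw [intervalIntegral.integral_sub hf intervalIntegrable_const, intervalIntegral.integral_const,
    smul_eq_mul] at this
  linarith

lemma exists_forall_sub_lt (hab : a < b) {δ : ℝ} (hδ : 0 < δ) :
    ∃ T : RChain a b, ∀ k < T.n, T.x (k + 1) - T.x k < δ := by
  obtain ⟨n, hn⟩ := exists_nat_gt ((b - a) / δ)
  have hba : 0 < b - a := sub_pos.2 hab
  have hn0 : (0 : ℝ) < n := (div_pos hba hδ).trans hn
  have hstep : ∀ k : ℕ, a + ((k + 1 : ℕ) : ℝ) * ((b - a) / n) - (a + k * ((b - a) / n))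
      = (b - a) / n := fun k => by push_cast; ring
  refine ⟨⟨n, by exact_mod_cast hn0, fun k => a + k * ((b - a) / n), by simp,
    by field_simp; ring, fun k _ => sub_pos.1 ?_⟩, fun k _ => ?_⟩
  · rw [hstep]; exact div_pos hba hn0
  · rw [hstep, div_lt_iff₀ hn0]
    rwa [div_lt_iff₀ hδ, mul_comm] at hn

end RChain

namespace IR

lemma mkI_val {u v : ℝ} (h : u ≤ v) : (mkI u v).val = (u, v) := by
  simp [mkI, h]

lemma lo_mkI {u v : ℝ} (h : u ≤ v) : lo (mkI u v) = u := by
  simp [lo, mkI_val h]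

lemma hi_mkI {u v : ℝ} (h : u ≤ v) : hi (mkI u v) = v := by
  simp [hi, mkI_val h]

lemma continuous_lo : Continuous lo := continuous_fst.comp continuous_subtype_val

lemma continuous_hi : Continuous hi := continuous_snd.comp continuous_subtype_val

lemma continuous_mkI_diag : Continuous fun x : ℝ => mkI x x := by
  have : (fun x : ℝ => mkI x x) = fun x => ⟨(x, x), le_rfl⟩ := funext fun x => by simp [mkI]
  rw [this]
  exact (continuous_id.prodMk continuous_id).subtype_mk _

lemma abs_lo_sub_le_dist (X Y : IR) : |lo X - lo Y| ≤ dist X Y := by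
  rw [Subtype.dist_eq, Prod.dist_eq, ← Real.dist_eq]
  exact le_max_left _ _

lemma abs_hi_sub_le_dist (X Y : IR) : |hi X - hi Y| ≤ dist X Y := by
  rw [Subtype.dist_eq, Prod.dist_eq, ← Real.dist_eq]
  exact le_max_right _ _

lemma dist_mkI {u v x y : ℝ} (huv : u ≤ v) (hxy : x ≤ y) :
    dist (mkI u v) (mkI x y) = max |u - x| |v - y| := by
  rw [Subtype.dist_eq, mkI_val huv, mkI_val hxy, Prod.dist_eq, Real.dist_eq, Real.dist_eq]

lemma isCompact_setOf_le_lo_hi_le (a b : ℝ) : IsCompact {X : IR | a ≤ lo X ∧ hi X ≤ b} := by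
  have hset : {X : IR | a ≤ lo X ∧ hi X ≤ b} = Subtype.val ⁻¹' Icc (a, a) (b, b) := by
    ext ⟨⟨u, v⟩, huv⟩
    simp only [lo, hi, mem_ofPred_eq, mem_preimage, mem_Icc, Prod.mk_le_mk]
    constructor
    · rintro ⟨hau, hvb⟩
      exact ⟨⟨hau, hau.trans huv⟩, huv.trans hvb, hvb⟩
    · rintro ⟨⟨hau, -⟩, -, hvb⟩
      exact ⟨hau, hvb⟩
  rw [hset]
  exact (isClosed_le continuous_fst continuous_snd).isClosedEmbedding_subtypeVal.isCompact_preimage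
    isCompact_Icc

def InclusionMonotoneOn (F : IR → IR) (a b : ℝ) : Prop :=
  ∀ X Y : IR, a ≤ lo X → hi X ≤ b → a ≤ lo Y → hi Y ≤ b →
    lo Y ≤ lo X → hi X ≤ hi Y → lo (F Y) ≤ lo (F X) ∧ hi (F X) ≤ hi (F Y)

variable {a b : ℝ} {F : IR → IR}

lemma InclusionMonotoneOn.image_mkI_diag_subset (hF : InclusionMonotoneOn F a b) {u v x : ℝ}
    (hau : a ≤ u) (hx : x ∈ Icc u v) (hvb : v ≤ b) :
    lo (F (mkI u v)) ≤ lo (F (mkI x x)) ∧ hi (F (mkI x x)) ≤ hi (F (mkI u v)) := by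
  have huv := hx.1.trans hx.2
  refine hF _ _ ?_ ?_ ?_ ?_ ?_ ?_ <;>
    simp only [lo_mkI huv, hi_mkI huv, lo_mkI le_rfl, hi_mkI le_rfl] <;> linarith [hx.1, hx.2]

section Continuous

variable (hFc : ContinuousOn F {X : IR | a ≤ lo X ∧ hi X ≤ b})
include hFc

lemma continuousOn_image_mkI_diag : ContinuousOn (fun x => F (mkI x x)) (Icc a b) :=
  hFc.comp continuous_mkI_diag.continuousOn fun x hx =>
    show a ≤ lo (mkI x x) ∧ hi (mkI x x) ≤ b by rw [lo_mkI le_rfl, hi_mkI le_rfl]; exact hx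

lemma intervalIntegrable_lo_diag (hab : a ≤ b) :
    IntervalIntegrable (fun x => lo (F (mkI x x))) volume a b :=
  (continuous_lo.comp_continuousOn (continuousOn_image_mkI_diag hFc)).intervalIntegrable_of_Icc
    hab

lemma intervalIntegrable_hi_diag (hab : a ≤ b) :
    IntervalIntegrable (fun x => hi (F (mkI x x))) volume a b :=
  (continuous_hi.comp_continuousOn (continuousOn_image_mkI_diag hFc)).intervalIntegrable_of_Icc
    hab

lemma exists_pos_forall_dist_image_mkI_lt {ε : ℝ} (hε : 0 < ε) :
    ∃ δ > 0, ∀ u x v, a ≤ u → x ∈ Icc u v → v ≤ b → v - u < δ →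
      dist (F (mkI u v)) (F (mkI x x)) < ε := by
  obtain ⟨δ, hδ, hF⟩ := Metric.uniformContinuousOn_iff.1
    ((isCompact_setOf_le_lo_hi_le a b).uniformContinuousOn_of_continuous hFc) ε hε
  refine ⟨δ, hδ, fun u x v hau hx hvb hwidth => hF _ ?_ _ ?_ ?_⟩
  · show a ≤ lo (mkI u v) ∧ hi (mkI u v) ≤ b
    rw [lo_mkI (hx.1.trans hx.2), hi_mkI (hx.1.trans hx.2)]
    exact ⟨hau, hvb⟩
  · show a ≤ lo (mkI x x) ∧ hi (mkI x x) ≤ b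
    rw [lo_mkI le_rfl, hi_mkI le_rfl]
    exact ⟨hau.trans hx.1, hx.2.trans hvb⟩
  · rw [dist_mkI (hx.1.trans hx.2) le_rfl]
    exact max_lt (abs_lt.2 ⟨by linarith [hx.2], by linarith [hx.1]⟩)
      (abs_lt.2 ⟨by linarith [hx.2], by linarith [hx.1]⟩)

end Continuous

lemma mooreSum_fst (T : RChain a b) :
    (mooreSum F T).1 = T.riemannSum fun u v => lo (F (mkI u v)) := by
  rw [mooreSum, Prod.fst_sum]
  rfl

lemma mooreSum_snd (T : RChain a b) :
    (mooreSum F T).2 = T.riemannSum fun u v => hi (F (mkI u v)) := by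
  rw [mooreSum, Prod.snd_sum]
  rfl

lemma mooreSum_fst_le_integral (hFc : ContinuousOn F {X : IR | a ≤ lo X ∧ hi X ≤ b})
    (hFm : InclusionMonotoneOn F a b) (T : RChain a b) :
    (mooreSum F T).1 ≤ ∫ x in a..b, lo (F (mkI x x)) := by
  rw [mooreSum_fst]
  exact T.riemannSum_le_integral (intervalIntegrable_lo_diag hFc T.le) fun k hk x hx =>
    (hFm.image_mkI_diag_subset (T.x_mem_Icc hk.le).1 hx (T.x_mem_Icc hk).2).1

lemma integral_le_mooreSum_snd (hFc : ContinuousOn F {X : IR | a ≤ lo X ∧ hi X ≤ b})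
    (hFm : InclusionMonotoneOn F a b) (T : RChain a b) :
    ∫ x in a..b, hi (F (mkI x x)) ≤ (mooreSum F T).2 := by
  rw [mooreSum_snd]
  exact T.integral_le_riemannSum (intervalIntegrable_hi_diag hFc T.le) fun k hk x hx =>
    (hFm.image_mkI_diag_subset (T.x_mem_Icc hk.le).1 hx (T.x_mem_Icc hk).2).2

lemma exists_mooreSum_close_to_integrals (hab : a < b)
    (hFc : ContinuousOn F {X : IR | a ≤ lo X ∧ hi X ≤ b}) {ε : ℝ} (hε : 0 < ε) :
    ∃ T : RChain a b,
      (∫ x in a..b, lo (F (mkI x x))) ≤ (mooreSum F T).1 + ε ∧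
      (mooreSum F T).2 ≤ (∫ x in a..b, hi (F (mkI x x))) + ε := by
  have hba : 0 < b - a := sub_pos.2 hab
  obtain ⟨δ, hδ, hF⟩ := exists_pos_forall_dist_image_mkI_lt hFc (div_pos hε hba)
  obtain ⟨T, hT⟩ := RChain.exists_forall_sub_lt hab hδ
  have hclose : ∀ k < T.n, ∀ x ∈ Icc (T.x k) (T.x (k + 1)),
      dist (F (mkI (T.x k) (T.x (k + 1)))) (F (mkI x x)) < ε / (b - a) := fun k hk x hx =>
    hF _ _ _ (T.x_mem_Icc hk.le).1 hx (T.x_mem_Icc hk).2 (hT k hk)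
  refine ⟨T, ?_, ?_⟩
  · rw [mooreSum_fst, ← div_mul_cancel₀ ε hba.ne']
    refine T.integral_le_riemannSum_add (intervalIntegrable_lo_diag hFc hab.le)
      fun k hk x hx => ?_
    linarith [abs_sub_lt_iff.1 ((abs_lo_sub_le_dist _ _).trans_lt (hclose k hk x hx))]
  · rw [mooreSum_snd, ← div_mul_cancel₀ ε hba.ne']
    refine T.riemannSum_le_integral_add (intervalIntegrable_hi_diag hFc hab.le)
      fun k hk x hx => ?_
    linarith [abs_sub_lt_iff.1 ((abs_hi_sub_le_dist _ _).trans_lt (hclose k hk x hx))]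

end IR

open IR in
/-- **Moore–Yang characterization theorem.**  Let `a < b` and let
`F : {X ∈ 𝕀ℝ : X ⊆ [a,b]} → 𝕀ℝ` be continuous w.r.t. the Moore metric and
inclusion monotonic.  Then the intersection of the sets `Σ(F,T) ⊆ ℝ` over all
partitions `T` of `[a,b]` is exactly `[∫_a^b f_l, ∫_a^b f_r]`, where
`f_l(x) = π₁F([x,x])` and `f_r(x) = π₂F([x,x])`. -/
theorem IR.mooreYang_characterization (a b : ℝ) (hab : a < b) (F : IR → IR)
    (hFc : ContinuousOn F {X : IR | a ≤ lo X ∧ hi X ≤ b})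
    (hFm : ∀ X Y : IR, a ≤ lo X → hi X ≤ b → a ≤ lo Y → hi Y ≤ b →
      lo Y ≤ lo X → hi X ≤ hi Y → lo (F Y) ≤ lo (F X) ∧ hi (F X) ≤ hi (F Y)) :
    (⋂ T : RChain a b, Set.Icc (mooreSum F T).1 (mooreSum F T).2) =
      Set.Icc (∫ x in a..b, lo (F (mkI x x))) (∫ x in a..b, hi (F (mkI x x))) := by
  ext y
  simp only [mem_iInter, mem_Icc]
  constructor
  · intro hy
    constructor
    · refine le_of_forall_pos_le_add fun ε hε => ?_
      obtain ⟨T, hlo, -⟩ := exists_mooreSum_close_to_integrals hab hFc hε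
      exact hlo.trans (add_le_add_left (hy T).1 ε)
    · refine le_of_forall_pos_le_add fun ε hε => ?_
      obtain ⟨T, -, hhi⟩ := exists_mooreSum_close_to_integrals hab hFc hε
      exact (hy T).2.trans hhi
  · rintro ⟨hlo, hhi⟩ T
    exact ⟨(mooreSum_fst_le_integral hFc hFm T).trans hlo,
      hhi.trans (integral_le_mooreSum_snd hFc hFm T)⟩
end
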